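/- arXiv:2406.09665 — 3 statements merged into one kernel-verified Lean document; each statement's English description precedes it below -/
import Mathlib

section
/- Let η be a bounded ℝ^d-valued random variable, β, σ > 0, and define Γ(x,y) := ‖x - βy‖₂²/(2σ²) and the vector field D(x) := E[η exp(-Γ(x,η))] / E[exp(-Γ(x,η))]. Then for every x ∈ ℝ^d the Jacobian ∇D(x) is the symmetric positive semidefinite matrix (β/σ²)·(E[η⊗η e^{-Γ(x,η)}]/E[e^{-Γ(x,η)}] − (E[η e^{-Γ(x,η)}]/E[e^{-Γ(x,η)}])^{⊗2}); in particular for every z ∈ ℝ^d, ⟨z·∇D(x), z⟩ = (β/σ²)·(E[⟨z,η⟩² e^{-Γ(x,η)}]/E[e^{-Γ(x,η)}] − (E[⟨z,η⟩ e^{-Γ(x,η)}]/E[e^{-Γ(x,η)}])²) ≥ 0. -/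
open MeasureTheory Real
open scoped RealInnerProductSpace

noncomputable def driftD {Ω : Type*} [MeasurableSpace Ω] (μ : Measure Ω) {d : ℕ}
    (η : Ω → EuclideanSpace ℝ (Fin d)) (β σ : ℝ) (x : EuclideanSpace ℝ (Fin d)) :
    EuclideanSpace ℝ (Fin d) :=
  (∫ ω, Real.exp (-(‖x - β • η ω‖ ^ 2 / (2 * σ ^ 2))) ∂μ)⁻¹ •
    ∫ ω, Real.exp (-(‖x - β • η ω‖ ^ 2 / (2 * σ ^ 2))) • η ω ∂μ

/-! The weight `w x y = exp (-‖x - β y‖² / (2σ²))` has logarithmic derivative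
`-⟪x - β y, ·⟫ / σ²` in `x`, and since `η` is bounded one may differentiate `Z x = ∫ w x η` and
`N x = ∫ w x η • η` under the integral sign. In the quotient rule for `driftD = Z⁻¹ • N` the terms
carrying `⟪x, ·⟫` cancel, leaving `β / σ²` times the covariance of `η` under the tilted law
`w x η dμ / Z x`; its quadratic form is a variance, hence nonnegative. -/

section GaussWeight

variable {E : Type*} [NormedAddCommGroup E] [InnerProductSpace ℝ E]

noncomputable def gaussWeight (β σ : ℝ) (x y : E) : ℝ := exp (-(‖x - β • y‖ ^ 2 / (2 * σ ^ 2)))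

noncomputable def gaussWeightFDeriv (β σ : ℝ) (x y : E) : E →L[ℝ] ℝ :=
  (-(σ ^ 2)⁻¹ * gaussWeight β σ x y) • innerSL ℝ (x - β • y)

theorem gaussWeight_pos (β σ : ℝ) (x y : E) : 0 < gaussWeight β σ x y := exp_pos _

theorem gaussWeight_le_one (β σ : ℝ) (x y : E) : gaussWeight β σ x y ≤ 1 :=
  exp_le_one_iff.mpr (neg_nonpos.mpr (by positivity))

@[fun_prop]
theorem continuous_gaussWeight (β σ : ℝ) (x : E) : Continuous (gaussWeight β σ x) := by
  unfold gaussWeight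
  fun_prop

theorem gaussWeightFDeriv_apply (β σ : ℝ) (x y w : E) :
    gaussWeightFDeriv β σ x y w = -(σ ^ 2)⁻¹ * gaussWeight β σ x y * (⟪x, w⟫ - β * ⟪y, w⟫) := by
  simp only [gaussWeightFDeriv, smul_apply, innerSL_apply_apply,
    inner_sub_left, real_inner_smul_left, smul_eq_mul]

theorem hasFDerivAt_gaussWeight (β σ : ℝ) (x y : E) :
    HasFDerivAt (gaussWeight β σ · y) (gaussWeightFDeriv β σ x y) x := by
  have hG : ∀ x', gaussWeight β σ x' y = exp (-(2 * σ ^ 2)⁻¹ * ‖x' - β • y‖ ^ 2) := fun x' => by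
    rw [gaussWeight, neg_mul, ← div_eq_inv_mul]
  convert (((hasFDerivAt_id x).sub_const (β • y)).norm_sq.const_mul (-(2 * σ ^ 2)⁻¹)).exp using 1
  · exact funext hG
  · ext w
    simp only [gaussWeightFDeriv_apply, hG, mul_inv_rev, neg_mul, id_eq, map_sub, map_smul,
      ContinuousLinearMap.comp_id, neg_smul, smul_neg, neg_apply, smul_apply, sub_apply,
      coe_innerSL_apply, smul_eq_mul, nsmul_eq_mul, Nat.cast_ofNat, neg_inj]
    ring

theorem norm_gaussWeightFDeriv_le (β σ : ℝ) (x y : E) :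
    ‖gaussWeightFDeriv β σ x y‖ ≤ (σ ^ 2)⁻¹ * ‖x - β • y‖ := by
  rw [gaussWeightFDeriv, norm_smul, innerSL_apply_norm, norm_mul, norm_neg, norm_inv,
    Real.norm_of_nonneg (sq_nonneg σ), Real.norm_of_nonneg (gaussWeight_pos β σ x y).le]
  gcongr
  exact mul_le_of_le_one_right (by positivity) (gaussWeight_le_one β σ x y)

theorem norm_gaussWeightFDeriv_smulRight_le {F : Type*} [NormedAddCommGroup F] [NormedSpace ℝ F]
    (β σ : ℝ) {x x' y : E} {v : F} {K C : ℝ} (hx' : dist x' x < 1) (hy : ‖y‖ ≤ K)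
    (hv : ‖v‖ ≤ C) :
    ‖(gaussWeightFDeriv β σ x' y).smulRight v‖ ≤ (σ ^ 2)⁻¹ * (‖x‖ + 1 + |β| * K) * C := by
  have hx'y : ‖x' - β • y‖ ≤ ‖x‖ + 1 + |β| * K := by
    calc ‖x' - β • y‖ ≤ ‖x'‖ + |β| * ‖y‖ := by
          rw [← Real.norm_eq_abs, ← norm_smul]
          exact norm_sub_le _ _
      _ ≤ ‖x‖ + 1 + |β| * K := by
        gcongr
        linarith [norm_le_norm_add_norm_sub' x' x, dist_eq_norm x' x]
  have hΦ : ‖gaussWeightFDeriv β σ x' y‖ ≤ (σ ^ 2)⁻¹ * (‖x‖ + 1 + |β| * K) :=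
    (norm_gaussWeightFDeriv_le β σ x' y).trans (by gcongr)
  rw [ContinuousLinearMap.norm_smulRight_apply]
  exact mul_le_mul hΦ hv (norm_nonneg _) ((norm_nonneg _).trans hΦ)

theorem norm_inner_smul_le {F : Type*} [NormedAddCommGroup F] [NormedSpace ℝ F] {y w : E} {v : F}
    {K C : ℝ} (hy : ‖y‖ ≤ K) (hv : ‖v‖ ≤ C) : ‖⟪y, w⟫ • v‖ ≤ K * ‖w‖ * C := by
  rw [norm_smul]
  exact mul_le_mul ((norm_inner_le_norm _ _).trans (by gcongr)) hv (norm_nonneg _)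
    (mul_nonneg ((norm_nonneg _).trans hy) (norm_nonneg w))

end GaussWeight

section Integral

variable {Ω E F : Type*} [MeasurableSpace Ω] {μ : Measure Ω} [IsFiniteMeasure μ]
  [NormedAddCommGroup E] [InnerProductSpace ℝ E] [NormedAddCommGroup F] [NormedSpace ℝ F]
  {η : Ω → E} {f : Ω → F} {K C : ℝ}

theorem integrable_gaussWeight (hη : AEStronglyMeasurable η μ) (β σ : ℝ) (x : E) :
    Integrable (fun ω => gaussWeight β σ x (η ω)) μ := by
  refine (integrable_const 1).mono'
    ((continuous_gaussWeight β σ x).comp_aestronglyMeasurable hη) (ae_of_all _ fun ω => ?_)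
  rw [Real.norm_of_nonneg (gaussWeight_pos β σ x (η ω)).le]
  exact gaussWeight_le_one β σ x (η ω)

theorem integrable_gaussWeight_smul (hη : AEStronglyMeasurable η μ) (hf : AEStronglyMeasurable f μ)
    (hfb : ∀ ω, ‖f ω‖ ≤ C) (β σ : ℝ) (x : E) :
    Integrable (fun ω => gaussWeight β σ x (η ω) • f ω) μ :=
  (integrable_gaussWeight hη β σ x).smul_bdd C hf (ae_of_all _ hfb)

theorem integrable_gaussWeightFDeriv_smulRight (hη : AEStronglyMeasurable η μ)
    (hηb : ∀ ω, ‖η ω‖ ≤ K) (hf : AEStronglyMeasurable f μ) (hfb : ∀ ω, ‖f ω‖ ≤ C) (β σ : ℝ)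
    (x : E) : Integrable (fun ω => (gaussWeightFDeriv β σ x (η ω)).smulRight (f ω)) μ := by
  have hcont : Continuous (gaussWeightFDeriv β σ x) := by
    unfold gaussWeightFDeriv
    fun_prop
  refine (integrable_const ((σ ^ 2)⁻¹ * (‖x‖ + 1 + |β| * K) * C)).mono'
    (isBoundedBilinearMap_smulRight.continuous.comp_aestronglyMeasurable
      ((hcont.comp_aestronglyMeasurable hη).prodMk hf))
    (ae_of_all _ fun ω => norm_gaussWeightFDeriv_smulRight_le β σ (by simp) (hηb ω) (hfb ω))

theorem hasFDerivAt_integral_gaussWeight_smul (hη : AEStronglyMeasurable η μ)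
    (hηb : ∀ ω, ‖η ω‖ ≤ K) (hf : AEStronglyMeasurable f μ) (hfb : ∀ ω, ‖f ω‖ ≤ C) (β σ : ℝ)
    (x : E) :
    HasFDerivAt (fun x => ∫ ω, gaussWeight β σ x (η ω) • f ω ∂μ)
      (∫ ω, (gaussWeightFDeriv β σ x (η ω)).smulRight (f ω) ∂μ) x :=
  hasFDerivAt_integral_of_dominated_of_fderiv_le (Metric.ball_mem_nhds x one_pos)
    (.of_forall fun x' => (integrable_gaussWeight_smul hη hf hfb β σ x').aestronglyMeasurable)
    (integrable_gaussWeight_smul hη hf hfb β σ x)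
    (integrable_gaussWeightFDeriv_smulRight hη hηb hf hfb β σ x).aestronglyMeasurable
    (ae_of_all _ fun ω _ hx' => norm_gaussWeightFDeriv_smulRight_le β σ hx' (hηb ω) (hfb ω))
    (integrable_const _)
    (ae_of_all _ fun ω x' _ => (hasFDerivAt_gaussWeight β σ x' (η ω)).smul_const (f ω))

theorem integral_gaussWeightFDeriv_smulRight_apply (hη : AEStronglyMeasurable η μ)
    (hηb : ∀ ω, ‖η ω‖ ≤ K) (hf : AEStronglyMeasurable f μ) (hfb : ∀ ω, ‖f ω‖ ≤ C) (β σ : ℝ)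
    (x w : E) :
    (∫ ω, (gaussWeightFDeriv β σ x (η ω)).smulRight (f ω) ∂μ) w =
      -(σ ^ 2)⁻¹ • (⟪x, w⟫ • ∫ ω, gaussWeight β σ x (η ω) • f ω ∂μ -
        β • ∫ ω, gaussWeight β σ x (η ω) • (⟪η ω, w⟫ • f ω) ∂μ) := by
  have hηf : ∀ ω, ‖⟪η ω, w⟫ • f ω‖ ≤ K * ‖w‖ * C := fun ω => norm_inner_smul_le (hηb ω) (hfb ω)
  rw [ContinuousLinearMap.integral_apply
      (integrable_gaussWeightFDeriv_smulRight hη hηb hf hfb β σ x),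
    ← integral_smul, ← integral_smul, ← integral_sub, ← integral_smul]
  · congr 1 with ω
    simp only [ContinuousLinearMap.smulRight_apply, gaussWeightFDeriv_apply, smul_smul,
      ← sub_smul]
    congr 1
    ring
  · exact (integrable_gaussWeight_smul hη hf hfb β σ x).smul _
  · exact (integrable_gaussWeight_smul hη ((hη.inner aestronglyMeasurable_const).smul hf) hηf
      β σ x).smul _

end Integral

theorem sq_integral_mul_div_le_integral_sq_mul_div {Ω : Type*} [MeasurableSpace Ω]
    {μ : Measure Ω} {w g : Ω → ℝ} (hw : ∀ ω, 0 ≤ w ω) (hw_int : Integrable w μ)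
    (hgw : Integrable (fun ω => g ω * w ω) μ) (hg2w : Integrable (fun ω => g ω ^ 2 * w ω) μ)
    (hpos : 0 < ∫ ω, w ω ∂μ) :
    ((∫ ω, g ω * w ω ∂μ) / ∫ ω, w ω ∂μ) ^ 2 ≤ (∫ ω, g ω ^ 2 * w ω ∂μ) / ∫ ω, w ω ∂μ := by
  set m := (∫ ω, g ω * w ω ∂μ) / ∫ ω, w ω ∂μ
  have hvar : 0 ≤ ∫ ω, (g ω - m) ^ 2 * w ω ∂μ :=
    integral_nonneg fun ω => mul_nonneg (sq_nonneg _) (hw ω)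
  have hexpand : ∫ ω, (g ω - m) ^ 2 * w ω ∂μ =
      (∫ ω, g ω ^ 2 * w ω ∂μ) - 2 * m * (∫ ω, g ω * w ω ∂μ) + m ^ 2 * ∫ ω, w ω ∂μ := by
    calc ∫ ω, (g ω - m) ^ 2 * w ω ∂μ
        = ∫ ω, g ω ^ 2 * w ω - 2 * m * (g ω * w ω) + m ^ 2 * w ω ∂μ := by
          congr 1 with ω
          ring
      _ = _ := by
          have hsub : Integrable (fun ω => g ω ^ 2 * w ω - 2 * m * (g ω * w ω)) μ :=
            hg2w.sub (hgw.const_mul _)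
          rw [integral_add hsub (hw_int.const_mul _), integral_sub hg2w (hgw.const_mul _),
            integral_const_mul, integral_const_mul]
  have hm : m * ∫ ω, w ω ∂μ = ∫ ω, g ω * w ω ∂μ := div_mul_cancel₀ _ hpos.ne'
  rw [hexpand, ← hm] at hvar
  rw [le_div_iff₀ hpos]
  nlinarith

theorem driftD_eq_gaussWeight {Ω : Type*} [MeasurableSpace Ω] (μ : Measure Ω) {d : ℕ}
    (η : Ω → EuclideanSpace ℝ (Fin d)) (β σ : ℝ) (x : EuclideanSpace ℝ (Fin d)) :
    driftD μ η β σ x = (∫ ω, gaussWeight β σ x (η ω) ∂μ)⁻¹ •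
      ∫ ω, gaussWeight β σ x (η ω) • η ω ∂μ :=
  rfl

section Drift

variable {Ω : Type*} [MeasurableSpace Ω] {μ : Measure Ω} [IsProbabilityMeasure μ] {d : ℕ}
  {η : Ω → EuclideanSpace ℝ (Fin d)} {K : ℝ}

theorem hasFDerivAt_driftD (hη : AEStronglyMeasurable η μ) (hηb : ∀ ω, ‖η ω‖ ≤ K) (β σ : ℝ)
    (x : EuclideanSpace ℝ (Fin d)) :
    ∃ D' : EuclideanSpace ℝ (Fin d) →L[ℝ] EuclideanSpace ℝ (Fin d),
      HasFDerivAt (driftD μ η β σ) D' x ∧ ∀ w, D' w = (β / σ ^ 2) •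
        ((∫ ω, gaussWeight β σ x (η ω) ∂μ)⁻¹ •
            ∫ ω, gaussWeight β σ x (η ω) • (⟪η ω, w⟫ • η ω) ∂μ -
          ((∫ ω, gaussWeight β σ x (η ω) ∂μ)⁻¹ * ∫ ω, gaussWeight β σ x (η ω) * ⟪η ω, w⟫ ∂μ) •
            driftD μ η β σ x) := by
  rw [show driftD μ η β σ = _ from funext (driftD_eq_gaussWeight μ η β σ)]
  have hZ : ∫ ω, gaussWeight β σ x (η ω) ∂μ ≠ 0 :=
    (integral_exp_pos (integrable_gaussWeight hη β σ x)).ne'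
  have hZd := hasFDerivAt_integral_gaussWeight_smul hη hηb aestronglyMeasurable_const
    (fun _ => (norm_one (α := ℝ)).le) β σ x
  simp only [smul_eq_mul, mul_one] at hZd
  have hNd := hasFDerivAt_integral_gaussWeight_smul hη hηb hη hηb β σ x
  refine ⟨_, ((hasDerivAt_inv hZ).comp_hasFDerivAt x hZd).smul hNd, fun w => ?_⟩
  rw [add_apply, smul_apply, ContinuousLinearMap.smulRight_apply, smul_apply,
    integral_gaussWeightFDeriv_smulRight_apply hη hηb hη hηb,
    integral_gaussWeightFDeriv_smulRight_apply hη hηb aestronglyMeasurable_const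
      (fun _ => (norm_one (α := ℝ)).le)]
  simp only [Function.comp_apply, smul_eq_mul, mul_one]
  match_scalars
  · field_simp
    ring
  · ring

theorem inner_fderiv_driftD (hη : AEStronglyMeasurable η μ) (hηb : ∀ ω, ‖η ω‖ ≤ K) (β σ : ℝ)
    (x z w : EuclideanSpace ℝ (Fin d)) :
    ⟪z, fderiv ℝ (driftD μ η β σ) x w⟫ = (β / σ ^ 2) *
      ((∫ ω, ⟪z, η ω⟫ * ⟪w, η ω⟫ * gaussWeight β σ x (η ω) ∂μ) /
          (∫ ω, gaussWeight β σ x (η ω) ∂μ) -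
        (∫ ω, ⟪z, η ω⟫ * gaussWeight β σ x (η ω) ∂μ) / (∫ ω, gaussWeight β σ x (η ω) ∂μ) *
          ((∫ ω, ⟪w, η ω⟫ * gaussWeight β σ x (η ω) ∂μ) / ∫ ω, gaussWeight β σ x (η ω) ∂μ)) := by
  obtain ⟨D', hD, hD'⟩ := hasFDerivAt_driftD hη hηb β σ x
  have hP : ⟪z, ∫ ω, gaussWeight β σ x (η ω) • (⟪η ω, w⟫ • η ω) ∂μ⟫ =
      ∫ ω, ⟪z, η ω⟫ * ⟪w, η ω⟫ * gaussWeight β σ x (η ω) ∂μ := by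
    rw [← integral_inner (𝕜 := ℝ) (integrable_gaussWeight_smul hη
      ((hη.inner aestronglyMeasurable_const).fun_smul hη)
      (fun ω => norm_inner_smul_le (hηb ω) (hηb ω)) β σ x)]
    congr 1 with ω
    rw [real_inner_smul_right, real_inner_smul_right, real_inner_comm w]
    ring
  have hN : ⟪z, ∫ ω, gaussWeight β σ x (η ω) • η ω ∂μ⟫ =
      ∫ ω, ⟪z, η ω⟫ * gaussWeight β σ x (η ω) ∂μ := by
    rw [← integral_inner (𝕜 := ℝ) (integrable_gaussWeight_smul hη hη hηb β σ x)]
    congr 1 with ω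
    rw [real_inner_smul_right, mul_comm]
  have hm : ∫ ω, gaussWeight β σ x (η ω) * ⟪η ω, w⟫ ∂μ =
      ∫ ω, ⟪w, η ω⟫ * gaussWeight β σ x (η ω) ∂μ := by
    congr 1 with ω
    rw [real_inner_comm, mul_comm]
  rw [hD.fderiv, hD', driftD_eq_gaussWeight, real_inner_smul_right, inner_sub_right,
    real_inner_smul_right, real_inner_smul_right, real_inner_smul_right, hP, hN, hm]
  ring

theorem sq_integral_inner_mul_gaussWeight_div_le (hη : AEStronglyMeasurable η μ)
    (hηb : ∀ ω, ‖η ω‖ ≤ K) (β σ : ℝ) (x z : EuclideanSpace ℝ (Fin d)) :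
    ((∫ ω, ⟪z, η ω⟫ * gaussWeight β σ x (η ω) ∂μ) / ∫ ω, gaussWeight β σ x (η ω) ∂μ) ^ 2 ≤
      (∫ ω, ⟪z, η ω⟫ ^ 2 * gaussWeight β σ x (η ω) ∂μ) / ∫ ω, gaussWeight β σ x (η ω) ∂μ := by
  have hG := integrable_gaussWeight hη β σ x
  have hzη : ∀ ω, ‖⟪z, η ω⟫‖ ≤ ‖z‖ * K := fun ω =>
    (norm_inner_le_norm _ _).trans (by gcongr; exact hηb ω)
  have hzηm : AEStronglyMeasurable (fun ω => ⟪z, η ω⟫) μ := aestronglyMeasurable_const.inner hη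
  exact sq_integral_mul_div_le_integral_sq_mul_div (fun ω => (gaussWeight_pos β σ x (η ω)).le) hG
    (hG.bdd_mul hzηm (ae_of_all _ hzη))
    (hG.bdd_mul (c := (‖z‖ * K) ^ 2) (hzηm.pow 2)
      (ae_of_all _ fun ω => by rw [norm_pow]; gcongr; exact hzη ω))
    (integral_exp_pos hG)

end Drift

theorem jacobian_of_driftD_general {Ω : Type*} [MeasurableSpace Ω] (μ : Measure Ω)
    [IsProbabilityMeasure μ] {d : ℕ}
    (η : Ω → EuclideanSpace ℝ (Fin d)) (hηm : Measurable η)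
    (K : ℝ) (hηb : ∀ ω, ‖η ω‖ ≤ K) (β σ : ℝ) (hβ : 0 < β)
    (x : EuclideanSpace ℝ (Fin d)) :
    DifferentiableAt ℝ (driftD μ η β σ) x ∧
    (∀ z w : EuclideanSpace ℝ (Fin d),
      ⟪z, fderiv ℝ (driftD μ η β σ) x w⟫ = ⟪w, fderiv ℝ (driftD μ η β σ) x z⟫) ∧
    (∀ z : EuclideanSpace ℝ (Fin d),
      ⟪z, fderiv ℝ (driftD μ η β σ) x z⟫ =
        (β / σ ^ 2) *
          ((∫ ω, ⟪z, η ω⟫ ^ 2 * Real.exp (-(‖x - β • η ω‖ ^ 2 / (2 * σ ^ 2))) ∂μ) /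
              (∫ ω, Real.exp (-(‖x - β • η ω‖ ^ 2 / (2 * σ ^ 2))) ∂μ) -
            ((∫ ω, ⟪z, η ω⟫ * Real.exp (-(‖x - β • η ω‖ ^ 2 / (2 * σ ^ 2))) ∂μ) /
                (∫ ω, Real.exp (-(‖x - β • η ω‖ ^ 2 / (2 * σ ^ 2))) ∂μ)) ^ 2) ∧
      0 ≤ ⟪z, fderiv ℝ (driftD μ η β σ) x z⟫) := by
  have hη : AEStronglyMeasurable η μ := hηm.aestronglyMeasurable
  obtain ⟨D', hD, -⟩ := hasFDerivAt_driftD hη hηb β σ x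
  refine ⟨hD.differentiableAt, fun z w => ?_, fun z => ?_⟩
  · simp only [inner_fderiv_driftD hη hηb, mul_comm ⟪z, _⟫ ⟪w, _⟫]
    ring
  · simp only [inner_fderiv_driftD hη hηb, ← sq]
    exact ⟨rfl, mul_nonneg (div_nonneg hβ.le (sq_nonneg σ))
      (sub_nonneg.mpr (sq_integral_inner_mul_gaussWeight_div_le hη hηb β σ x z))⟩

theorem jacobian_of_driftD {Ω : Type*} [MeasurableSpace Ω] (μ : Measure Ω)
    [IsProbabilityMeasure μ] {d : ℕ}
    (η : Ω → EuclideanSpace ℝ (Fin d)) (hηm : Measurable η)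
    (K : ℝ) (hηb : ∀ ω, ‖η ω‖ ≤ K) (β σ : ℝ) (hβ : 0 < β) (hσ : 0 < σ)
    (x : EuclideanSpace ℝ (Fin d)) :
    DifferentiableAt ℝ (driftD μ η β σ) x ∧
    (∀ z w : EuclideanSpace ℝ (Fin d),
      ⟪z, fderiv ℝ (driftD μ η β σ) x w⟫ = ⟪w, fderiv ℝ (driftD μ η β σ) x z⟫) ∧
    (∀ z : EuclideanSpace ℝ (Fin d),
      ⟪z, fderiv ℝ (driftD μ η β σ) x z⟫ =
        (β / σ ^ 2) *
          ((∫ ω, ⟪z, η ω⟫ ^ 2 * Real.exp (-(‖x - β • η ω‖ ^ 2 / (2 * σ ^ 2))) ∂μ) /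
              (∫ ω, Real.exp (-(‖x - β • η ω‖ ^ 2 / (2 * σ ^ 2))) ∂μ) -
            ((∫ ω, ⟪z, η ω⟫ * Real.exp (-(‖x - β • η ω‖ ^ 2 / (2 * σ ^ 2))) ∂μ) /
                (∫ ω, Real.exp (-(‖x - β • η ω‖ ^ 2 / (2 * σ ^ 2))) ∂μ)) ^ 2) ∧
      0 ≤ ⟪z, fderiv ℝ (driftD μ η β σ) x z⟫) :=
  jacobian_of_driftD_general μ η hηm K hηb β σ hβ x
end

section
/- Let η be an ℝ^d-valued random variable with ‖η‖₂ ≤ K almost surely, β, σ > 0, Γ(x,y) := ‖x − βy‖₂²/(2σ²), and D(x) := E[η e^{-Γ(x,η)}]/E[e^{-Γ(x,η)}]. Then for all x, y ∈ ℝ^d, ⟨x − y, D(x) − D(y)⟩ ≤ (βK²/σ²)‖x − y‖₂². -/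
/-!
Let `ν` be the Gibbs measure `∝ exp (-Γ(y, η)) dμ` and `θ = ⟪x - y, η⟫`. Expanding the square,
the Gibbs measure at `x` is the exponential tilt of `ν` by `(β / σ²) θ`, so
`⟪x - y, D x - D y⟫` is the increment over `[0, β / σ²]` of the derivative of the cumulant
generating function of `θ` under `ν`. Its second derivative is the variance of `θ` under a tilted
probability measure, hence at most `(K ‖x - y‖)²` since `|θ| ≤ K ‖x - y‖`.
-/

open MeasureTheory Real
open scoped RealInnerProductSpace

namespace ProbabilityTheory

variable {Ω : Type*} {mΩ : MeasurableSpace Ω} {μ : Measure Ω} {X : Ω → ℝ} {c : ℝ}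

lemma integrableExpSet_eq_univ_of_abs_le [IsFiniteMeasure μ] (hX : AEMeasurable X μ)
    (hc : ∀ᵐ ω ∂μ, |X ω| ≤ c) : integrableExpSet X μ = Set.univ :=
  Set.eq_univ_of_forall fun _ ↦
    integrable_exp_mul_of_mem_Icc hX (hc.mono fun _ h ↦ Set.mem_Icc.2 (abs_le.1 h))

lemma iteratedDeriv_two_cgf_le_of_abs_le [IsProbabilityMeasure μ] (hX : AEMeasurable X μ)
    (hc : ∀ᵐ ω ∂μ, |X ω| ≤ c) (t : ℝ) : iteratedDeriv 2 (cgf X μ) t ≤ c ^ 2 := by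
  have ht : t ∈ interior (integrableExpSet X μ) := by
    simp [integrableExpSet_eq_univ_of_abs_le hX hc]
  have := isProbabilityMeasure_tilted (interior_subset (s := integrableExpSet X μ) ht)
  have hac := tilted_absolutelyContinuous μ (t * X ·)
  rw [← variance_tilted_mul ht]
  calc Var[X; μ.tilted (t * X ·)] ≤ ((c - -c) / 2) ^ 2 :=
        variance_le_sq_of_bounded (hac.ae_le (hc.mono fun _ h ↦ Set.mem_Icc.2 (abs_le.1 h)))
          (hX.mono_ac hac)
    _ = c ^ 2 := by ring

/-- The tilted mean is the derivative of the cumulant generating function, whose second derivative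
is a variance. -/
lemma integral_tilted_mul_self_sub_le [IsProbabilityMeasure μ] (hX : AEMeasurable X μ)
    (hc : ∀ᵐ ω ∂μ, |X ω| ≤ c) {t : ℝ} (ht : 0 ≤ t) :
    (μ.tilted (t * X ·))[X] - μ[X] ≤ c ^ 2 * t := by
  have hint : ∀ s, s ∈ interior (integrableExpSet X μ) := by
    simp [integrableExpSet_eq_univ_of_abs_le hX hc]
  have hdiff : Differentiable ℝ (deriv (cgf X μ)) := fun s ↦
    ((analyticAt_cgf (hint s)).deriv).differentiableAt
  rw [integral_tilted_mul_self (hint t), ← (by simpa using deriv_cgf_zero (hint 0) :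
    deriv (cgf X μ) 0 = μ[X])]
  simpa using image_sub_le_mul_sub_of_deriv_le hdiff
    (fun s ↦ by simpa [iteratedDeriv_succ] using iteratedDeriv_two_cgf_le_of_abs_le hX hc s) ht

end ProbabilityTheory

namespace MeasureTheory.Measure

variable {α : Type*} {mα : MeasurableSpace α}

lemma tilted_add_const (μ : Measure α) (f : α → ℝ) (c : ℝ) :
    μ.tilted (fun x ↦ f x + c) = μ.tilted f := by
  simp only [Measure.tilted, exp_add, integral_mul_const,
    mul_div_mul_right _ _ (exp_pos c).ne']

end MeasureTheory.Measure

lemma neg_sq_norm_sub_smul_div_eq {E : Type*} [NormedAddCommGroup E] [InnerProductSpace ℝ E]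
    (x y v : E) (β σ : ℝ) :
    -(‖x - β • v‖ ^ 2 / (2 * σ ^ 2)) =
      -(‖y - β • v‖ ^ 2 / (2 * σ ^ 2)) + β / σ ^ 2 * ⟪x - y, v⟫ +
        -((2 * ⟪x - y, y⟫ + ‖x - y‖ ^ 2) / (2 * σ ^ 2)) := by
  rw [show x - β • v = (y - β • v) + (x - y) by abel, norm_add_sq_real, real_inner_comm,
    inner_sub_right, real_inner_smul_right]
  ring

section Drift

variable {Ω : Type*} [MeasurableSpace Ω] {d : ℕ}

noncomputable def gibbsMeasure (μ : Measure Ω) (η : Ω → EuclideanSpace ℝ (Fin d)) (β σ : ℝ)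
    (x : EuclideanSpace ℝ (Fin d)) : Measure Ω :=
  μ.tilted fun ω ↦ -(‖x - β • η ω‖ ^ 2 / (2 * σ ^ 2))

instance (μ : Measure Ω) (η : Ω → EuclideanSpace ℝ (Fin d)) (β σ : ℝ)
    (x : EuclideanSpace ℝ (Fin d)) : IsZeroOrProbabilityMeasure (gibbsMeasure μ η β σ x) :=
  isZeroOrProbabilityMeasure_tilted

variable {μ : Measure Ω} {η : Ω → EuclideanSpace ℝ (Fin d)} {β σ : ℝ}

lemma driftD_eq_integral_gibbsMeasure (x : EuclideanSpace ℝ (Fin d)) :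
    driftD μ η β σ x = ∫ ω, η ω ∂gibbsMeasure μ η β σ x := by
  rw [gibbsMeasure, integral_tilted, driftD, ← integral_smul]
  simp only [smul_smul, div_eq_inv_mul]

lemma integrable_exp_neg_sq_norm_sub_smul_div [IsFiniteMeasure μ] (hηm : Measurable η)
    (x : EuclideanSpace ℝ (Fin d)) :
    Integrable (fun ω ↦ exp (-(‖x - β • η ω‖ ^ 2 / (2 * σ ^ 2)))) μ := by
  refine .of_bound (by fun_prop) 1 (.of_forall fun ω ↦ ?_)
  rw [norm_of_nonneg (exp_pos _).le, exp_le_one_iff, neg_nonpos]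
  positivity

/-- The factor of `exp (-‖x - β • η ω‖ ^ 2 / (2 σ ^ 2))` that does not depend on `ω` is absorbed
by the normalization. -/
lemma gibbsMeasure_eq_tilted [IsFiniteMeasure μ] (hηm : Measurable η)
    (x y : EuclideanSpace ℝ (Fin d)) :
    gibbsMeasure μ η β σ x =
      (gibbsMeasure μ η β σ y).tilted fun ω ↦ β / σ ^ 2 * ⟪x - y, η ω⟫ := by
  rw [gibbsMeasure, gibbsMeasure, tilted_tilted (integrable_exp_neg_sq_norm_sub_smul_div hηm y)]
  simp only [neg_sq_norm_sub_smul_div_eq x y, Measure.tilted_add_const]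
  rfl

lemma inner_driftD_eq_integral (hηm : Measurable η) {K : ℝ}
    (hηb : ∀ᵐ ω ∂μ, ‖η ω‖ ≤ K) (u x : EuclideanSpace ℝ (Fin d)) :
    ⟪u, driftD μ η β σ x⟫ = ∫ ω, ⟪u, η ω⟫ ∂gibbsMeasure μ η β σ x := by
  rw [driftD_eq_integral_gibbsMeasure, integral_inner]
  exact .of_bound hηm.aestronglyMeasurable K ((tilted_absolutelyContinuous _ _).ae_le hηb)

end Drift

open ProbabilityTheory

theorem driftD_one_sided_lipschitz_general {Ω : Type*} [MeasurableSpace Ω] (μ : Measure Ω)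
    [IsProbabilityMeasure μ] {d : ℕ}
    (η : Ω → EuclideanSpace ℝ (Fin d)) (hηm : Measurable η)
    (K : ℝ) (hηb : ∀ᵐ ω ∂μ, ‖η ω‖ ≤ K) (β σ : ℝ) (hβ : 0 < β)
    (x y : EuclideanSpace ℝ (Fin d)) :
    ⟪x - y, driftD μ η β σ x - driftD μ η β σ y⟫ ≤
      (β * K ^ 2 / σ ^ 2) * ‖x - y‖ ^ 2 := by
  set ν := gibbsMeasure μ η β σ y
  have : IsProbabilityMeasure ν :=
    isProbabilityMeasure_tilted (integrable_exp_neg_sq_norm_sub_smul_div hηm y)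
  have hθb : ∀ᵐ ω ∂ν, |⟪x - y, η ω⟫| ≤ K * ‖x - y‖ := by
    filter_upwards [(tilted_absolutelyContinuous _ _).ae_le hηb] with ω hω
    exact (abs_real_inner_le_norm _ _).trans (by rw [mul_comm]; gcongr)
  calc ⟪x - y, driftD μ η β σ x - driftD μ η β σ y⟫
      = (ν.tilted fun ω ↦ β / σ ^ 2 * ⟪x - y, η ω⟫)[fun ω ↦ ⟪x - y, η ω⟫] -
          ν[fun ω ↦ ⟪x - y, η ω⟫] := by
        rw [inner_sub_right, inner_driftD_eq_integral hηm hηb, inner_driftD_eq_integral hηm hηb,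
          gibbsMeasure_eq_tilted hηm x y]
    _ ≤ (K * ‖x - y‖) ^ 2 * (β / σ ^ 2) :=
        integral_tilted_mul_self_sub_le (by fun_prop) hθb (by positivity)
    _ = (β * K ^ 2 / σ ^ 2) * ‖x - y‖ ^ 2 := by ring

theorem driftD_one_sided_lipschitz {Ω : Type*} [MeasurableSpace Ω] (μ : Measure Ω)
    [IsProbabilityMeasure μ] {d : ℕ}
    (η : Ω → EuclideanSpace ℝ (Fin d)) (hηm : Measurable η)
    (K : ℝ) (hηb : ∀ᵐ ω ∂μ, ‖η ω‖ ≤ K) (β σ : ℝ) (hβ : 0 < β) (hσ : 0 < σ)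
    (x y : EuclideanSpace ℝ (Fin d)) :
    ⟪x - y, driftD μ η β σ x - driftD μ η β σ y⟫ ≤
      (β * K ^ 2 / σ ^ 2) * ‖x - y‖ ^ 2 :=
  driftD_one_sided_lipschitz_general μ η hηm K hηb β σ hβ x y
end

section
/- Let f : ℝ^d → [0, ∞) be continuous with finite supremum f* attained at some point x*. Let X₁, …, X_N be i.i.d. random variables with law μ₀(dx) = ρ(x)dx. Then for any ε ∈ (0, f*), E|max_{n=1,…,N} f(X_n) − f*|² ≤ ε² + (f*)² e^{-N δ_ε}, where δ_ε := ∫_{{f > f* − ε}} ρ(x) dx. -/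
/-!
Let `A = {f ≤ f* - ε}`. If some sample leaves `A`, the maximum lies in `(f* - ε, f*]` and the
squared error is at most `ε²`; otherwise it is at most `(f*)²`, since `0 ≤ max ≤ f*`. By
independence all `N` samples stay in `A` with probability `μ₀(A)^N = (1 - μ₀(Aᶜ))^N`, and
`1 - x ≤ e^{-x}` together with `δ_ε ≤ μ₀(Aᶜ)` bounds this by `e^{-N δ_ε}`.
-/

open MeasureTheory ProbabilityTheory

section SupremumBound

variable {ι : Type*} {y : ι → ℝ} {c : ℝ}

lemma abs_iSup_sub_le_of_exists_lt [Finite ι] (hyc : ∀ i, y i ≤ c) (hc : 0 ≤ c) {ε : ℝ}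
    (hε : ∃ i, c - ε < y i) : |(⨆ i, y i) - c| ≤ ε := by
  obtain ⟨i, hi⟩ := hε
  have hle : y i ≤ ⨆ i, y i := le_ciSup (Finite.bddAbove_range y) i
  rw [abs_sub_comm, abs_of_nonneg (sub_nonneg.2 (Real.iSup_le hyc hc))]
  linarith

lemma abs_iSup_sub_le_self (hy0 : ∀ i, 0 ≤ y i) (hyc : ∀ i, y i ≤ c) (hc : 0 ≤ c) :
    |(⨆ i, y i) - c| ≤ c := by
  rw [abs_sub_comm, abs_of_nonneg (sub_nonneg.2 (Real.iSup_le hyc hc))]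
  linarith [Real.iSup_nonneg hy0]

open Classical in
lemma sq_abs_iSup_sub_le [Finite ι] (hy0 : ∀ i, 0 ≤ y i) (hyc : ∀ i, y i ≤ c) (hc : 0 ≤ c) (ε : ℝ) :
    |(⨆ i, y i) - c| ^ 2 ≤ ε ^ 2 + if ∀ i, y i ≤ c - ε then c ^ 2 else 0 := by
  split_ifs with h
  · nlinarith [abs_iSup_sub_le_self hy0 hyc hc, abs_nonneg ((⨆ i, y i) - c)]
  · push Not at h
    rw [add_zero]
    exact pow_le_pow_left₀ (abs_nonneg _) (abs_iSup_sub_le_of_exists_lt hyc hc h) 2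

end SupremumBound

lemma ofReal_integral_le_lintegral_ofReal {α : Type*} [MeasurableSpace α]
    {μ : Measure α} (f : α → ℝ) :
    ENNReal.ofReal (∫ a, f a ∂μ) ≤ ∫⁻ a, ENNReal.ofReal (f a) ∂μ := by
  by_cases hf : Integrable f μ
  · rw [integral_eq_lintegral_pos_part_sub_lintegral_neg_part hf]
    exact (ENNReal.ofReal_le_ofReal (sub_le_self _ ENNReal.toReal_nonneg)).trans
      ENNReal.ofReal_toReal_le
  · simp [integral_undef hf]

lemma ofReal_setIntegral_le_withDensity {α : Type*} [MeasurableSpace α] (μ : Measure α)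
    (f : α → ℝ) (s : Set α) :
    ENNReal.ofReal (∫ a in s, f a ∂μ) ≤ μ.withDensity (fun a => ENNReal.ofReal (f a)) s :=
  (ofReal_integral_le_lintegral_ofReal f).trans (withDensity_apply_le _ s)

lemma measure_iInter_preimage_eq_pow {Ω E ι : Type*} [MeasurableSpace Ω] [MeasurableSpace E]
    [Fintype ι] {μ : Measure Ω} {ν : Measure E} {X : ι → Ω → E} (hX : ∀ i, Measurable (X i))
    (hlaw : ∀ i, μ.map (X i) = ν) (hindep : iIndepFun X μ) {A : Set E} (hA : MeasurableSet A) :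
    μ (⋂ i, X i ⁻¹' A) = ν A ^ Fintype.card ι := by
  have hmarginal (i : ι) : μ (X i ⁻¹' A) = ν A := by rw [← hlaw i, Measure.map_apply (hX i) hA]
  rw [hindep.meas_iInter fun i => ⟨A, hA, rfl⟩]
  simp only [hmarginal, Finset.prod_const, Finset.card_univ]

lemma measureReal_pow_le_exp_neg_mul {E : Type*} [MeasurableSpace E] {ν : Measure E}
    [IsProbabilityMeasure ν] {A : Set E} (hA : MeasurableSet A) {δ : ℝ}
    (hδ : ENNReal.ofReal δ ≤ ν Aᶜ) (N : ℕ) : ν.real A ^ N ≤ Real.exp (-N * δ) := by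
  have hδA : δ ≤ ν.real Aᶜ := (ENNReal.ofReal_le_iff_le_toReal (measure_ne_top _ _)).1 hδ
  have hA_le : ν.real A ≤ Real.exp (-δ) := by
    linarith [probReal_compl_eq_one_sub (μ := ν) hA, Real.one_sub_le_exp_neg δ]
  calc ν.real A ^ N ≤ Real.exp (-δ) ^ N := by gcongr
    _ = Real.exp (-N * δ) := by rw [← Real.exp_nat_mul]; ring_nf

lemma integral_le_add_mul_measureReal {Ω : Type*} [MeasurableSpace Ω] {μ : Measure Ω}
    [IsProbabilityMeasure μ] {g : Ω → ℝ} {S : Set Ω} (hS : MeasurableSet S) {a b : ℝ}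
    (hg0 : ∀ ω, 0 ≤ g ω) (hg : ∀ ω, g ω ≤ a + S.indicator (fun _ => b) ω) :
    ∫ ω, g ω ∂μ ≤ a + b * μ.real S := by
  have hint : Integrable (fun ω => a + S.indicator (fun _ => b) ω) μ :=
    (integrable_const a).add ((integrable_const b).indicator hS)
  calc ∫ ω, g ω ∂μ ≤ ∫ ω, a + S.indicator (fun _ => b) ω ∂μ :=
        integral_mono_of_nonneg (ae_of_all _ hg0) hint (ae_of_all _ hg)
    _ = a + b * μ.real S := by
        rw [integral_add (integrable_const a) ((integrable_const b).indicator hS),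
          integral_const, integral_indicator_const _ hS]
        simp [mul_comm]

theorem max_approx_sup_general {Ω : Type*} [MeasurableSpace Ω] (μ : Measure Ω)
    [IsProbabilityMeasure μ] {d : ℕ} (f : EuclideanSpace ℝ (Fin d) → ℝ)
    (hf : Continuous f) (hf0 : ∀ x, 0 ≤ f x)
    (fs : ℝ)
    (hsup : ∀ x, f x ≤ fs)
    (ρ : EuclideanSpace ℝ (Fin d) → ℝ)
    (N : ℕ) (hN : 0 < N) (X : Fin N → Ω → EuclideanSpace ℝ (Fin d))
    (hXm : ∀ n, Measurable (X n))
    (hlaw : ∀ n, Measure.map (X n) μ = volume.withDensity fun x => ENNReal.ofReal (ρ x))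
    (hindep : iIndepFun X μ)
    (ε : ℝ) :
    ∫ ω, |(⨆ n : Fin N, f (X n ω)) - fs| ^ 2 ∂μ ≤
      ε ^ 2 + fs ^ 2 * Real.exp (-(N : ℝ) * ∫ x in {x | fs - ε < f x}, ρ x) := by
  set ν : Measure (EuclideanSpace ℝ (Fin d)) := volume.withDensity fun x => ENNReal.ofReal (ρ x)
  have : IsProbabilityMeasure ν := by
    rw [← hlaw ⟨0, hN⟩]; exact Measure.isProbabilityMeasure_map (hXm _).aemeasurable
  set A := {x | f x ≤ fs - ε}
  have hA : MeasurableSet A := measurableSet_le hf.measurable measurable_const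
  have hS : MeasurableSet (⋂ n, X n ⁻¹' A) := .iInter fun n => hXm n hA
  have hfs : 0 ≤ fs := (hf0 0).trans (hsup 0)
  have hpointwise : ∀ ω, |(⨆ n, f (X n ω)) - fs| ^ 2 ≤
      ε ^ 2 + (⋂ n, X n ⁻¹' A).indicator (fun _ => fs ^ 2) ω := fun ω => by
    convert sq_abs_iSup_sub_le (fun n => hf0 (X n ω)) (fun n => hsup (X n ω)) hfs ε using 2
    simp [Set.indicator, A]
  have hδ : ENNReal.ofReal (∫ x in {x | fs - ε < f x}, ρ x) ≤ ν Aᶜ := by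
    convert ofReal_setIntegral_le_withDensity volume ρ _ using 2
    ext x; simp [A]
  have hall : μ.real (⋂ n, X n ⁻¹' A) = ν.real A ^ N := by
    simp [Measure.real, measure_iInter_preimage_eq_pow hXm hlaw hindep hA]
  calc _ ≤ ε ^ 2 + fs ^ 2 * μ.real (⋂ n, X n ⁻¹' A) :=
        integral_le_add_mul_measureReal hS (fun ω => sq_nonneg _) hpointwise
    _ ≤ _ := by rw [hall]; gcongr; exact measureReal_pow_le_exp_neg_mul hA hδ N

theorem max_approx_sup {Ω : Type*} [MeasurableSpace Ω] (μ : Measure Ω)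
    [IsProbabilityMeasure μ] {d : ℕ} (f : EuclideanSpace ℝ (Fin d) → ℝ)
    (hf : Continuous f) (hf0 : ∀ x, 0 ≤ f x)
    (fs : ℝ) (xs : EuclideanSpace ℝ (Fin d)) (hfs : f xs = fs)
    (hsup : ∀ x, f x ≤ fs)
    (ρ : EuclideanSpace ℝ (Fin d) → ℝ) (hρ : Measurable ρ) (hρ0 : ∀ x, 0 ≤ ρ x)
    (N : ℕ) (hN : 0 < N) (X : Fin N → Ω → EuclideanSpace ℝ (Fin d))
    (hXm : ∀ n, Measurable (X n))
    (hlaw : ∀ n, Measure.map (X n) μ = volume.withDensity fun x => ENNReal.ofReal (ρ x))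
    (hindep : iIndepFun X μ)
    (ε : ℝ) (hε : ε ∈ Set.Ioo (0:ℝ) fs) :
    ∫ ω, |(⨆ n : Fin N, f (X n ω)) - fs| ^ 2 ∂μ ≤
      ε ^ 2 + fs ^ 2 * Real.exp (-(N : ℝ) * ∫ x in {x | fs - ε < f x}, ρ x) :=
  max_approx_sup_general μ f hf hf0 fs hsup ρ N hN X hXm hlaw hindep ε
end
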